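/- arXiv:2301.07222 — 6 statements merged into one kernel-verified Lean document; each statement's English description precedes it below -/
import Mathlib

section
/- A primitive word v over a totally ordered alphabet is perfectly clustering if and only if for every circular factor of v of the form a·u·b (with a, b letters and u a word), there is no circular factor of v of the form a'·u·b' with a < a' and b < b'. -/
variable {α : Type*}

/-- The list of all cyclic rotations of a word. -/
def rotations (w : List α) : List (List α) :=
  (List.range w.length).map (fun i => w.rotate i)

/-- The Burrows–Wheeler transform: last letters of the lexicographically
sorted list of rotations. -/
def BWT [LinearOrder α] (w : List α) : List α :=
  (List.insertionSort (· ≤ ·) (rotations w)).filterMap List.getLast?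

/-- A word is primitive if it is nonempty and not a proper power. -/
def IsPrimitiveWord (w : List α) : Prop :=
  w ≠ [] ∧ ∀ (u : List α) (k : ℕ), w = (List.replicate k u).flatten → k = 1

/-- A primitive word is perfectly clustering if its Burrows–Wheeler
transform is weakly decreasing. -/
def PerfectlyClustering [LinearOrder α] (w : List α) : Prop :=
  IsPrimitiveWord w ∧ List.Chain' (· ≥ ·) (BWT w)

/-- `u` is a circular factor of `w`: a factor of `ww` of length at most `|w|`. -/
def CircFactor (u w : List α) : Prop :=
  u.length ≤ w.length ∧ u <:+: (w ++ w)

/-!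
If two rotations `r < r'` of `v` first differ at letters `b < b'` after a common prefix `u`,
then their last letters `a`, `a'` give circular factors `a u b` and `a' u b'`; conversely such
factors sit at the ends of two rotations compared by `u b < u b'`. So the last letters of the
sorted rotations decrease exactly when no such pair has `a < a'`.
-/

open List

lemma mem_rotations_iff_isRotated {v r : List α} (hv : v ≠ []) : r ∈ rotations v ↔ v ~r r := by
  simp only [rotations, mem_map, mem_range]
  constructor
  · rintro ⟨i, -, rfl⟩
    exact ⟨i, rfl⟩
  · rintro ⟨i, rfl⟩
    exact ⟨i % v.length, Nat.mod_lt _ (length_pos_iff.mpr hv), rotate_mod _ _⟩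

lemma List.IsRotated.infix_append_self {v r : List α} (h : v ~r r) : r <:+: v ++ v := by
  obtain ⟨n, rfl⟩ := h
  rw [rotate_eq_drop_append_take_mod]
  exact ⟨take (n % v.length) v, drop (n % v.length) v, by
    rw [← append_assoc, take_append_drop, append_assoc, take_append_drop]⟩

lemma exists_isRotated_prefix_of_infix_append_self {v w : List α} (hw : w.length ≤ v.length)
    (h : w <:+: v ++ v) : ∃ r, v ~r r ∧ w <+: r := by
  obtain ⟨s, t, hst⟩ := h
  -- an occurrence starting inside the second copy of `v` also starts inside the first
  wlog hs : s.length ≤ v.length generalizing s t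
  · obtain ⟨s', rfl⟩ : v <+: s :=
      prefix_of_prefix_length_le (prefix_append v v) ⟨w ++ t, by simpa using hst⟩ (by omega)
    have hv : s' ++ w ++ t = v := by simpa using hst
    refine this s' (t ++ v) (by rw [← append_assoc, hv]) ?_
    have := congrArg length hv
    simp only [length_append] at this
    omega
  refine ⟨v.rotate s.length, ⟨_, rfl⟩, ?_⟩
  have hdrop : v.drop s.length ++ v = w ++ t := by
    rw [← drop_append_of_le_length hs, ← hst, append_assoc, drop_left]
  refine prefix_of_prefix_length_le (prefix_append w t) ?_ (by simpa using hw)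
  rw [← hdrop, rotate_eq_drop_append_take hs]
  exact (prefix_append_right_inj _).mpr (take_prefix _ _)

lemma circFactor_iff {v w : List α} (hv : v ≠ []) :
    CircFactor w v ↔ w.length ≤ v.length ∧ ∃ r ∈ rotations v, w <+: r := by
  simp only [CircFactor, mem_rotations_iff_isRotated hv]
  refine and_congr_right fun hw => ⟨exists_isRotated_prefix_of_infix_append_self hw, ?_⟩
  rintro ⟨r, hr, hwr⟩
  exact hwr.isInfix.trans hr.infix_append_self

lemma cons_prefix_iff_prefix_rotate_one {l w : List α} {a : α} (h : w.length < l.length) :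
    a :: w <+: l ↔ w <+: l.rotate 1 ∧ (l.rotate 1).getLast? = some a := by
  cases l with
  | nil => simp at h
  | cons c t =>
    have hwt : w ≠ t ++ [c] := fun h' => by simp [h'] at h
    simp [prefix_concat_iff, hwt, and_comm, eq_comm]

lemma circFactor_cons_iff {v w : List α} {a : α} (hv : v ≠ []) :
    CircFactor (a :: w) v ↔
      w.length < v.length ∧ ∃ r ∈ rotations v, w <+: r ∧ r.getLast? = some a := by
  simp only [circFactor_iff hv, mem_rotations_iff_isRotated hv, length_cons,
    Nat.add_one_le_iff]
  refine and_congr_right fun hw => ⟨?_, ?_⟩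
  · rintro ⟨r, hr, har⟩
    have hrw : w.length < r.length := hr.perm.length_eq ▸ hw
    exact ⟨r.rotate 1, hr.trans ⟨1, rfl⟩, (cons_prefix_iff_prefix_rotate_one hrw).mp har⟩
  · rintro ⟨r, hr, hwr, har⟩
    refine ⟨r.rotate (r.length - 1), hr.trans ⟨_, rfl⟩, ?_⟩
    have hrv : r.length = v.length := hr.perm.length_eq.symm
    have hlen : w.length < (r.rotate (r.length - 1)).length := by
      rw [length_rotate, hrv]; exact hw
    have hr1 : (r.rotate (r.length - 1)).rotate 1 = r := by
      rw [rotate_rotate, Nat.sub_add_cancel (by omega), rotate_length]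
    rw [cons_prefix_iff_prefix_rotate_one hlen, hr1]
    exact ⟨hwr, har⟩

lemma pairwise_iff_forall_lt_of_sorted {β : Type*} [PartialOrder β] {s : List β}
    {Q : β → β → Prop} (hs : s.Pairwise (· ≤ ·)) (hQ : ∀ x, Q x x) :
    s.Pairwise Q ↔ ∀ x ∈ s, ∀ y ∈ s, x < y → Q x y := by
  refine ⟨fun h => ?_, fun h => hs.imp_of_mem fun hx hy hxy => ?_⟩
  · induction s with
    | nil => simp
    | cons z t ih =>
      rw [pairwise_cons] at hs h
      simp only [mem_cons]
      rintro x (rfl | hx) y (rfl | hy) hxy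
      · exact absurd hxy (lt_irrefl _)
      · exact h.1 y hy
      · exact absurd (hs.1 x hx) hxy.not_ge
      · exact ih hs.2 h.2 x hx y hy hxy
  · rcases hxy.eq_or_lt with rfl | hlt
    · exact hQ _
    · exact h _ hx _ hy hlt

lemma isChain_ge_bwt_iff [LinearOrder α] (w : List α) :
    (BWT w).IsChain (· ≥ ·) ↔ ∀ r ∈ rotations w, ∀ r' ∈ rotations w, r < r' →
      ∀ a, r.getLast? = some a → ∀ a', r'.getLast? = some a' → a' ≤ a := by
  have hperm := perm_insertionSort (· ≤ ·) (rotations w)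
  rw [BWT, isChain_iff_pairwise, pairwise_filterMap,
    pairwise_iff_forall_lt_of_sorted (pairwise_insertionSort _ _)]
  · simp only [hperm.mem_iff, ge_iff_le]
  · intro x a ha a' ha'
    rw [ha] at ha'
    exact (Option.some.inj ha').ge

lemma exists_prefix_concat_lt_of_lt [LinearOrder α] {x y : List α} (h : x < y)
    (hl : x.length = y.length) :
    ∃ (u : List α) (b b' : α), b < b' ∧ u ++ [b] <+: x ∧ u ++ [b'] <+: y := by
  change Lex (· < ·) x y at h
  induction h with
  | nil => simp at hl
  | @rel a l₁ b l₂ hab => exact ⟨[], a, b, hab, ⟨l₁, rfl⟩, ⟨l₂, rfl⟩⟩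
  | @cons a l₁ l₂ _ ih =>
    obtain ⟨u, b, b', hbb, h₁, h₂⟩ := ih (by simpa using hl)
    exact ⟨a :: u, b, b', hbb, cons_prefix_cons.mpr ⟨rfl, h₁⟩, cons_prefix_cons.mpr ⟨rfl, h₂⟩⟩

lemma lt_of_prefix_concat_lt [LinearOrder α] {x y u : List α} {b b' : α} (hb : b < b')
    (hx : u ++ [b] <+: x) (hy : u ++ [b'] <+: y) : x < y := by
  obtain ⟨s, rfl⟩ := hx
  obtain ⟨t, rfl⟩ := hy
  simpa using append_left_lt (l₁ := u) (cons_lt_cons_iff.mpr (.inl hb) : b :: s < b' :: t)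

section Crossing

variable [LinearOrder α] {v : List α}

lemma not_circFactor_of_getLast_antitone (hv : v ≠ [])
    (h : ∀ r ∈ rotations v, ∀ r' ∈ rotations v, r < r' →
      ∀ a, r.getLast? = some a → ∀ a', r'.getLast? = some a' → a' ≤ a)
    {a b a' b' : α} {u : List α} (hc : CircFactor (a :: (u ++ [b])) v) (ha : a < a')
    (hb : b < b') : ¬ CircFactor (a' :: (u ++ [b'])) v := by
  intro hc'
  obtain ⟨-, r, hr, hur, hra⟩ := (circFactor_cons_iff hv).mp hc
  obtain ⟨-, r', hr', hur', hra'⟩ := (circFactor_cons_iff hv).mp hc'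
  exact (h r hr r' hr' (lt_of_prefix_concat_lt hb hur hur') a hra a' hra').not_gt ha

lemma getLast_antitone_of_not_circFactor (hv : v ≠ [])
    (h : ∀ (a b : α) (u : List α), CircFactor (a :: (u ++ [b])) v →
      ∀ (a' b' : α), a < a' → b < b' → ¬ CircFactor (a' :: (u ++ [b'])) v)
    {r r' : List α} (hr : r ∈ rotations v) (hr' : r' ∈ rotations v) (hlt : r < r')
    {a a' : α} (ha : r.getLast? = some a) (ha' : r'.getLast? = some a') : a' ≤ a := by
  have hvr := (mem_rotations_iff_isRotated hv).mp hr
  have hvr' := (mem_rotations_iff_isRotated hv).mp hr'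
  obtain ⟨u, b, b', hb, hur, hur'⟩ :=
    exists_prefix_concat_lt_of_lt hlt (hvr.perm.length_eq.symm.trans hvr'.perm.length_eq)
  by_contra! haa
  rcases hur.length_le.lt_or_eq with hshort | hfull
  · have hlen : (u ++ [b]).length < v.length := hvr.perm.length_eq ▸ hshort
    exact h a b u ((circFactor_cons_iff hv).mpr ⟨hlen, r, hr, hur, ha⟩) a' b' haa hb
      ((circFactor_cons_iff hv).mpr ⟨by simpa using hlen, r', hr', hur', ha'⟩)
  · -- `r = u ++ [b]` and `r' = u ++ [b']` would be rearrangements of each other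
    have hfull' : (u ++ [b']).length = r'.length := by
      rw [← hvr'.perm.length_eq, hvr.perm.length_eq, ← hfull]; simp
    have hperm : u ++ [b] ~ u ++ [b'] := by
      rw [hur.eq_of_length hfull, hur'.eq_of_length hfull']
      exact hvr.perm.symm.trans hvr'.perm
    exact hb.ne (singleton_perm_singleton.mp ((perm_append_left_iff u).mp hperm))

end Crossing

theorem stmt0 [LinearOrder α] (v : List α) (hv : IsPrimitiveWord v) :
    PerfectlyClustering v ↔
      ∀ (a b : α) (u : List α), CircFactor (a :: (u ++ [b])) v →
        ∀ (a' b' : α), a < a' → b < b' → ¬ CircFactor (a' :: (u ++ [b'])) v :=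
  (and_iff_right hv).trans <| (isChain_ge_bwt_iff v).trans
    ⟨fun h _ _ _ hc _ _ ha hb => not_circFactor_of_getLast_antitone hv.1 h hc ha hb,
      fun h _ hr _ hr' hlt _ ha _ ha' => getLast_antitone_of_not_circFactor hv.1 h hr hr' hlt ha ha'⟩
end

section
/- For n even, the ⌈(n-1)/2⌉ = n/2 vectors b^i (1 ≤ i ≤ n/2 - 1) defined by b^i = -2e_1 + e_{i+1} + e_{n-i+1}, together with b^{n/2} = -e_1 + e_{(n/2)+1}, are linearly independent, each has coordinate sum zero, and they are pairwise orthogonal (and each is isotropic) with respect to the form ⟨(a_i),(b_i)⟩ = Σ_i a_i b_i + 2 Σ_{i<j} a_i b_j on ℚ^n. -/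
/-!
Polarizing `⟨a, a⟩ = (∑ i, a i)²` gives `⟨a, b⟩ + ⟨b, a⟩ = 2 (∑ i, a i) (∑ j, b j)`, so the form
is alternating on the hyperplane of vectors with coordinate sum zero, which contains every `b^i`.
Hence only `⟨b^i, b^j⟩ = 0` for `i < j` has to be computed, by bilinearity from
`⟨e_k, e_l⟩ = 1, 2, 0` according as `k = l`, `k < l`, `k > l`. Linear independence holds because
coordinates `2, …, n/2 + 1` of `b^i` form the `i`-th unit vector.
-/

/-- The Euler form of `Λ_n` in `g`-vector coordinates on `ℚ^n`. -/
def eulerFormQ (n : ℕ) (a b : Fin n → ℚ) : ℚ :=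
  (∑ i, a i * b i) + 2 * ∑ i, ∑ j, if i < j then a i * b j else 0

/-- The `k`-th standard basis vector of `ℚ^n`, with 1-based index `k`. -/
def stdBasis (n : ℕ) (k : ℕ) : Fin n → ℚ := fun j => if (j : ℕ) + 1 = k then 1 else 0

/-- The vector `b^i`: for `1 ≤ i ≤ n/2 - 1`, `b^i = -2 e_1 + e_{i+1} + e_{n-i+1}`,
and `b^{n/2} = -e_1 + e_{n/2+1}`. -/
def bvec (n : ℕ) (i : ℕ) : Fin n → ℚ :=
  if i = n / 2 then - stdBasis n 1 + stdBasis n (n / 2 + 1)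
  else (-2 : ℚ) • stdBasis n 1 + stdBasis n (i + 1) + stdBasis n (n - i + 1)

def eulerWeight {n : ℕ} (i j : Fin n) : ℚ :=
  if i = j then 1 else if i < j then 2 else 0

lemma eulerWeight_add_swap {n : ℕ} (i j : Fin n) : eulerWeight i j + eulerWeight j i = 2 := by
  rcases lt_trichotomy i j with h | rfl | h
  · simp [eulerWeight, h, h.ne, h.ne', h.not_gt]
  · norm_num [eulerWeight]
  · simp [eulerWeight, h, h.ne, h.ne', h.not_gt]

lemma eulerWeight_mk {n k l : ℕ} (hk : k < n) (hl : l < n) :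
    eulerWeight (⟨k, hk⟩ : Fin n) ⟨l, hl⟩ = if k = l then 1 else if k < l then 2 else 0 := by
  simp [eulerWeight]

lemma eulerFormQ_eq_sum (n : ℕ) (a b : Fin n → ℚ) :
    eulerFormQ n a b = ∑ i, ∑ j, a i * b j * eulerWeight i j := by
  have hdiag : ∑ i, a i * b i = ∑ i, ∑ j, if i = j then a i * b j else 0 := by
    simp
  rw [eulerFormQ, hdiag, Finset.mul_sum, ← Finset.sum_add_distrib]
  refine Finset.sum_congr rfl fun i _ => ?_
  rw [Finset.mul_sum, ← Finset.sum_add_distrib]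
  refine Finset.sum_congr rfl fun j _ => ?_
  simp only [eulerWeight]
  split_ifs with hij hlt
  · exact absurd hlt (hij ▸ lt_irrefl i)
  all_goals ring

def eulerForm (n : ℕ) : LinearMap.BilinForm ℚ (Fin n → ℚ) :=
  LinearMap.mk₂ ℚ (eulerFormQ n)
    (fun a a' b => by
      simp only [eulerFormQ_eq_sum, Pi.add_apply, add_mul, Finset.sum_add_distrib])
    (fun c a b => by
      simp only [eulerFormQ_eq_sum, Pi.smul_apply, smul_eq_mul, Finset.mul_sum, mul_assoc])
    (fun a b b' => by
      simp only [eulerFormQ_eq_sum, Pi.add_apply, mul_add, add_mul, Finset.sum_add_distrib])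
    (fun c a b => by
      simp only [eulerFormQ_eq_sum, Pi.smul_apply, smul_eq_mul, Finset.mul_sum, mul_assoc,
        mul_left_comm _ c])

lemma eulerForm_apply (n : ℕ) (a b : Fin n → ℚ) : eulerForm n a b = eulerFormQ n a b := rfl

lemma eulerFormQ_single {n : ℕ} (k l : Fin n) :
    eulerFormQ n (Pi.single k 1) (Pi.single l 1) = eulerWeight k l := by
  simp [eulerFormQ_eq_sum, Pi.single_apply]

lemma eulerFormQ_add_swap (n : ℕ) (a b : Fin n → ℚ) :
    eulerFormQ n a b + eulerFormQ n b a = 2 * (∑ i, a i) * ∑ j, b j := by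
  rw [eulerFormQ_eq_sum, eulerFormQ_eq_sum, Finset.sum_comm (f := fun i j => b i * a j * _),
    ← Finset.sum_add_distrib, mul_assoc, Finset.sum_mul_sum, Finset.mul_sum]
  refine Finset.sum_congr rfl fun i _ => ?_
  rw [← Finset.sum_add_distrib, Finset.mul_sum]
  refine Finset.sum_congr rfl fun j _ => ?_
  rw [← eulerWeight_add_swap i j]
  ring

lemma eulerFormQ_swap_of_sum_eq_zero {n : ℕ} {a : Fin n → ℚ} (ha : ∑ i, a i = 0)
    (b : Fin n → ℚ) : eulerFormQ n b a = -eulerFormQ n a b := by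
  have h := eulerFormQ_add_swap n a b
  rw [ha, mul_zero, zero_mul] at h
  linarith

lemma eulerFormQ_self_of_sum_eq_zero {n : ℕ} {a : Fin n → ℚ} (ha : ∑ i, a i = 0) :
    eulerFormQ n a a = 0 := by
  linarith [eulerFormQ_swap_of_sum_eq_zero ha a]

lemma stdBasis_succ {n k : ℕ} (hk : k < n) : stdBasis n (k + 1) = Pi.single ⟨k, hk⟩ 1 := by
  ext j
  simp [stdBasis, Pi.single_apply, Fin.ext_iff]

lemma bvec_of_lt {n i : ℕ} (hi1 : 1 ≤ i) (hi : i < n / 2) :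
    bvec n i = (-2 : ℚ) • Pi.single ⟨0, by omega⟩ 1 + Pi.single ⟨i, by omega⟩ 1
      + Pi.single ⟨n - i, by omega⟩ 1 := by
  rw [bvec, if_neg hi.ne, ← stdBasis_succ, ← stdBasis_succ, ← stdBasis_succ]

lemma bvec_half {n : ℕ} (hn : 0 < n) :
    bvec n (n / 2) = -Pi.single ⟨0, hn⟩ 1 + Pi.single ⟨n / 2, by omega⟩ 1 := by
  rw [bvec, if_pos rfl, ← stdBasis_succ, ← stdBasis_succ]

lemma sum_bvec {n i : ℕ} (hi1 : 1 ≤ i) (hi : i ≤ n / 2) : ∑ j, bvec n i j = 0 := by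
  rcases hi.lt_or_eq with hi | rfl
  · norm_num [bvec_of_lt hi1 hi, Finset.sum_add_distrib, ← Finset.mul_sum]
  · simp [bvec_half (show 0 < n by omega), Finset.sum_add_distrib]

lemma eulerFormQ_bvec_of_lt {n i j : ℕ} (hi1 : 1 ≤ i) (hij : i < j) (hj : j ≤ n / 2) :
    eulerFormQ n (bvec n i) (bvec n j) = 0 := by
  rw [← eulerForm_apply, bvec_of_lt hi1 (by omega)]
  rcases hj.lt_or_eq with hj | rfl <;> [rw [bvec_of_lt (by omega) hj]; rw [bvec_half (by omega)]]
  all_goals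
    simp only [map_add, map_smul, map_neg, LinearMap.add_apply, LinearMap.smul_apply,
      eulerForm_apply, eulerFormQ_single, eulerWeight_mk]
    simp (disch := omega) only [if_pos, if_neg]
    norm_num

lemma bvec_apply_succ {n t p : ℕ} (ht1 : 1 ≤ t) (ht : t ≤ n / 2) (hp : p < n / 2) :
    bvec n t ⟨p + 1, by omega⟩ = if p + 1 = t then 1 else 0 := by
  rcases ht.lt_or_eq with ht | rfl
  · have hp' : p + 1 ≠ n - t := by omega
    simp [bvec_of_lt ht1 ht, Pi.single_apply, hp']
  · simp [bvec_half (show 0 < n by omega), Pi.single_apply]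

lemma linearIndependent_bvec (n : ℕ) :
    LinearIndependent ℚ (fun i : Fin (n / 2) => bvec n ((i : ℕ) + 1)) := by
  let restrict : (Fin n → ℚ) →ₗ[ℚ] Fin (n / 2) → ℚ :=
    LinearMap.funLeft ℚ ℚ fun k => ⟨k + 1, by have := k.2; omega⟩
  refine LinearIndependent.of_comp restrict ?_
  convert Pi.linearIndependent_single_one (Fin (n / 2)) ℚ using 1
  ext i k
  simp [restrict, LinearMap.funLeft_apply, bvec_apply_succ, Pi.single_apply, Fin.ext_iff]

theorem stmt9_general (n : ℕ) :
    LinearIndependent ℚ (fun i : Fin (n / 2) => bvec n ((i : ℕ) + 1)) ∧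
    (∀ i, 1 ≤ i → i ≤ n / 2 → ∑ j, bvec n i j = 0) ∧
    (∀ i j, 1 ≤ i → i ≤ n / 2 → 1 ≤ j → j ≤ n / 2 →
      eulerFormQ n (bvec n i) (bvec n j) = 0) := by
  refine ⟨linearIndependent_bvec n, fun i hi1 hi => sum_bvec hi1 hi, fun i j hi1 hi hj1 hj => ?_⟩
  rcases lt_trichotomy i j with hij | rfl | hij
  · exact eulerFormQ_bvec_of_lt hi1 hij hj
  · exact eulerFormQ_self_of_sum_eq_zero (sum_bvec hi1 hi)
  · rw [eulerFormQ_swap_of_sum_eq_zero (sum_bvec hj1 hj), eulerFormQ_bvec_of_lt hj1 hij hi,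
      neg_zero]

theorem stmt9 (n : ℕ) (hn : 2 ∣ n) (hpos : 0 < n) :
    LinearIndependent ℚ (fun i : Fin (n / 2) => bvec n ((i : ℕ) + 1)) ∧
    (∀ i, 1 ≤ i → i ≤ n / 2 → ∑ j, bvec n i j = 0) ∧
    (∀ i j, 1 ≤ i → i ≤ n / 2 → 1 ≤ j → j ≤ n / 2 →
      eulerFormQ n (bvec n i) (bvec n j) = 0) :=
  stmt9_general n
end

section
/- Let w be a weakly decreasing word over a totally ordered alphabet. Then every necklace (conjugacy class of words) in the multiset Φ(w) is the conjugacy class of a perfectly clustering word, where Φ is the Gessel–Reutenauer map sending w to the multiset of primitive necklaces obtained from the cycles of the inverse of the standard permutation of w. -/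
variable {α : Type*}

/-- Positions of the word sorted by letter (ties broken by position),
i.e. the list whose `r`-th entry is the position of rank `r`. -/
def sortedPositions [LinearOrder α] (w : List α) : List (Fin w.length) :=
  List.insertionSort (fun i j => toLex (w.get i, (i:ℕ)) ≤ toLex (w.get j, (j:ℕ)))
    (List.finRange w.length)

theorem length_sortedPositions [LinearOrder α] (w : List α) :
    (sortedPositions w).length = w.length := by
  simp [sortedPositions]

/-- The inverse of the standard permutation of `w`: `tau w r` is the position
of the letter of rank `r`. -/
def tau [LinearOrder α] (w : List α) : Fin w.length → Fin w.length :=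
  fun r => (sortedPositions w).get (Fin.cast (length_sortedPositions w).symm r)

/-- The word read along the cycle of `tau w` through position `j`. -/
noncomputable def cycleWord [LinearOrder α] (w : List α) (j : Fin w.length) : List α :=
  (List.range (Function.minimalPeriod (tau w) j)).map (fun t => w.get ((tau w)^[t] j))

/-!
Write `τ = tau w` and `st = stdPerm w = τ⁻¹`. If `st i < st i'`, then the words read from `i` and
`i'` along `τ` compare in the same order: the first letters are ordered by the definition of `st`,
and when they tie, the positions are ordered, which says exactly that `st (τ i) < st (τ i')`, so the
comparison passes to the next letters.

Two points of one `τ`-cycle of length `m` therefore read different words of length `m`: otherwise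
the ranks of their orbits would stay strictly ordered forever, and would increase strictly around
the finite cycle. Hence the cycle word is primitive, and its rotations, sorted, are the words read
from the points of the cycle in order of rank. The last letter of the word read from `i` is
`w (τ⁻¹ i) = w (st i)`, so when `w` is weakly decreasing the Burrows–Wheeler transform is weakly
decreasing as well.
-/

open Function

theorem Function.IsPeriodicPt.not_forall_lt_iterate {X β : Type*} [Preorder β] {f : X → X}
    {g : X → β} {x : X} {m : ℕ} (hm : 0 < m) (hx : IsPeriodicPt f m x) (d : ℕ) :
    ¬ ∀ t, g (f^[t] x) < g (f^[t] (f^[d] x)) := by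
  intro h
  have hmono : StrictMono fun k => g (f^[k * d] x) := strictMono_nat_of_lt_succ fun k => by
    simpa only [Nat.succ_mul, iterate_add_apply] using h (k * d)
  have := hmono hm
  simp only [zero_mul, iterate_zero_apply, (hx.mul_const d).eq] at this
  exact lt_irrefl _ this

theorem List.rotate_length_flatten_replicate (u : List α) (k : ℕ) :
    (List.replicate k u).flatten.rotate u.length = (List.replicate k u).flatten := by
  cases k with
  | zero => simp
  | succ k =>
    rw [List.replicate_succ, List.flatten_cons, List.rotate_append_length_eq,
      ← List.flatten_concat, ← List.replicate_succ', List.replicate_succ, List.flatten_cons]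

theorem isPrimitiveWord_of_rotate_ne_self {v : List α} (hv : v ≠ [])
    (h : ∀ d, 0 < d → d < v.length → v.rotate d ≠ v) : IsPrimitiveWord v := by
  refine ⟨hv, fun u k hk => by_contra fun hk1 => ?_⟩
  have hlen : v.length = k * u.length := by simp [hk]
  have hk0 : k ≠ 0 := by rintro rfl; exact hv (by simpa using hk)
  have hu : 0 < u.length := Nat.pos_of_ne_zero fun hu => hv (List.eq_nil_of_length_eq_zero
    (by rw [hlen, hu, mul_zero]))
  refine h u.length hu (by rw [hlen]; exact lt_mul_left hu (by omega)) ?_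
  rw [hk]
  exact List.rotate_length_flatten_replicate u k

section StandardPermutation

variable [LinearOrder α] (w : List α)

theorem tau_injective : Injective (tau w) := fun _ _ h =>
  Fin.cast_injective _ <| List.nodup_iff_injective_get.mp
    ((List.perm_insertionSort _ _).nodup_iff.mpr (List.nodup_finRange _)) h

noncomputable def stdPerm : Equiv.Perm (Fin w.length) :=
  (Equiv.ofBijective (tau w) (Finite.injective_iff_bijective.mp (tau_injective w))).symm

@[simp]
theorem stdPerm_tau (r : Fin w.length) : stdPerm w (tau w r) = r :=
  Equiv.symm_apply_apply _ r

@[simp]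
theorem tau_stdPerm (i : Fin w.length) : tau w (stdPerm w i) = i :=
  Equiv.ofBijective_apply_symm_apply _ _ i

variable {w}

theorem toLex_lt_of_stdPerm_lt {i i' : Fin w.length} (h : stdPerm w i < stdPerm w i') :
    toLex (w.get i, (i : ℕ)) < toLex (w.get i', (i' : ℕ)) := by
  let key : Fin w.length → Lex (α × ℕ) := fun p => toLex (w.get p, (p : ℕ))
  have : Std.Total fun p q => key p ≤ key q := ⟨fun p q => le_total _ _⟩
  have : IsTrans _ fun p q => key p ≤ key q := ⟨fun p q r => le_trans⟩
  have hle : key (tau w (stdPerm w i)) ≤ key (tau w (stdPerm w i')) :=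
    (List.pairwise_insertionSort _ (List.finRange w.length)).rel_get_of_lt
      (a := Fin.cast (length_sortedPositions w).symm (stdPerm w i))
      (b := Fin.cast (length_sortedPositions w).symm (stdPerm w i')) h
  rw [tau_stdPerm, tau_stdPerm] at hle
  refine lt_of_le_of_ne hle fun heq => h.ne ?_
  rw [Fin.ext (congrArg (fun p => (ofLex p).2) heq)]

end StandardPermutation

section OrbitWord

variable [LinearOrder α] {w : List α}

variable (w) in
def orbitWord (t : ℕ) (i : Fin w.length) : List α :=
  (List.range t).map fun s => w.get ((tau w)^[s] i)

theorem cycleWord_eq_orbitWord (j : Fin w.length) :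
    cycleWord w j = orbitWord w (minimalPeriod (tau w) j) j := rfl

@[simp]
theorem length_orbitWord (t : ℕ) (i : Fin w.length) : (orbitWord w t i).length = t := by
  simp [orbitWord]

theorem orbitWord_succ (t : ℕ) (i : Fin w.length) :
    orbitWord w (t + 1) i = w.get i :: orbitWord w t (tau w i) := by
  simp [orbitWord, List.range_succ_eq_map, Function.comp_def]

theorem orbitWord_lt_or_of_stdPerm_lt (t : ℕ) {i i' : Fin w.length}
    (h : stdPerm w i < stdPerm w i') :
    orbitWord w t i < orbitWord w t i' ∨ (orbitWord w t i = orbitWord w t i' ∧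
      stdPerm w ((tau w)^[t] i) < stdPerm w ((tau w)^[t] i')) := by
  induction t generalizing i i' with
  | zero => exact Or.inr ⟨rfl, h⟩
  | succ t ih =>
    rw [orbitWord_succ, orbitWord_succ]
    rcases Prod.Lex.toLex_lt_toLex.mp (toLex_lt_of_stdPerm_lt h) with hlt | ⟨heq, hpos⟩
    · exact Or.inl (List.Lex.rel hlt)
    · have hnext : stdPerm w (tau w i) < stdPerm w (tau w i') := by simpa using hpos
      rw [show w.get i = w.get i' from heq]
      rcases ih hnext with hlt | ⟨heq', hlt'⟩
      · exact Or.inl (List.Lex.cons hlt)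
      · exact Or.inr ⟨by rw [heq'], by simpa only [iterate_succ_apply] using hlt'⟩

theorem stdPerm_le_of_orbitWord_lt {t : ℕ} {i i' : Fin w.length}
    (h : orbitWord w t i < orbitWord w t i') : stdPerm w i ≤ stdPerm w i' := by
  by_contra! h'
  rcases orbitWord_lt_or_of_stdPerm_lt t h' with hlt | ⟨heq, -⟩
  · exact lt_asymm h hlt
  · exact h.ne heq.symm

theorem stdPerm_iterate_lt_of_forall_orbitWord_eq {i i' : Fin w.length}
    (h : stdPerm w i < stdPerm w i') (heq : ∀ t, orbitWord w t i = orbitWord w t i') (t : ℕ) :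
    stdPerm w ((tau w)^[t] i) < stdPerm w ((tau w)^[t] i') :=
  ((orbitWord_lt_or_of_stdPerm_lt t h).resolve_left (by rw [heq t]; exact lt_irrefl _)).2

theorem rotate_orbitWord {m : ℕ} {i : Fin w.length} (hi : IsPeriodicPt (tau w) m i) (t : ℕ) :
    (orbitWord w m i).rotate t = orbitWord w m ((tau w)^[t] i) := by
  refine List.ext_getElem (by simp) fun k hk _ => ?_
  simp only [List.getElem_rotate, length_orbitWord]
  simp only [orbitWord, List.getElem_map, List.getElem_range]
  rw [hi.iterate_mod_apply, iterate_add_apply]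

variable {m : ℕ} (hm : 0 < m)
include hm

theorem orbitWord_eq_of_isPeriodicPt {i i' : Fin w.length} (hi : IsPeriodicPt (tau w) m i)
    (hi' : IsPeriodicPt (tau w) m i') (h : orbitWord w m i = orbitWord w m i') (t : ℕ) :
    orbitWord w t i = orbitWord w t i' := by
  refine List.map_congr_left fun s _ => ?_
  have hs := congrArg (·[s % m]?) h
  simp only [orbitWord, List.getElem?_map, List.getElem?_range (Nat.mod_lt s hm),
    Option.map_some, Option.some_inj] at hs
  rwa [hi.iterate_mod_apply, hi'.iterate_mod_apply] at hs

theorem iterate_eq_self_of_orbitWord_eq {i : Fin w.length} (hi : IsPeriodicPt (tau w) m i)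
    {d : ℕ} (h : orbitWord w m ((tau w)^[d] i) = orbitWord w m i) : (tau w)^[d] i = i := by
  set i' := (tau w)^[d] i
  have hi' : IsPeriodicPt (tau w) m i' := hi.apply_iterate d
  have heq := orbitWord_eq_of_isPeriodicPt hm hi' hi h
  by_contra hne
  rcases lt_or_gt_of_ne ((stdPerm w).injective.ne hne) with hlt | hlt
  · have hback : (tau w)^[(m - 1) * d] i' = i := by
      rw [← iterate_add_apply, ← add_one_mul, Nat.sub_one_add_one hm.ne', (hi.mul_const d).eq]
    refine hi'.not_forall_lt_iterate (g := stdPerm w) hm ((m - 1) * d) fun t => ?_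
    rw [hback]
    exact stdPerm_iterate_lt_of_forall_orbitWord_eq hlt heq t
  · exact hi.not_forall_lt_iterate hm d
      (stdPerm_iterate_lt_of_forall_orbitWord_eq hlt fun t => (heq t).symm)

theorem getLast?_orbitWord {i : Fin w.length} (hi : IsPeriodicPt (tau w) m i) :
    (orbitWord w m i).getLast? = some (w.get (stdPerm w i)) := by
  obtain ⟨n, rfl⟩ : ∃ n, m = n + 1 := ⟨m - 1, by omega⟩
  have hlast : (tau w)^[n] i = stdPerm w i := by
    rw [← stdPerm_tau w ((tau w)^[n] i), ← iterate_succ_apply' (tau w), hi.eq]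
  simp [orbitWord, List.getLast?_map, List.getLast?_range, hlast]

end OrbitWord

section CycleWord

variable [LinearOrder α] {w : List α} (j : Fin w.length)

theorem minimalPeriod_tau_pos : 0 < minimalPeriod (tau w) j :=
  minimalPeriod_pos_of_mem_periodicPts ((tau_injective w).mem_periodicPts j)

theorem isPrimitiveWord_cycleWord : IsPrimitiveWord (cycleWord w j) := by
  have hm := minimalPeriod_tau_pos j
  have hj := isPeriodicPt_minimalPeriod (tau w) j
  rw [cycleWord_eq_orbitWord]
  refine isPrimitiveWord_of_rotate_ne_self (List.ne_nil_of_length_pos (by simpa using hm))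
    fun d hd hdm hrot => ?_
  rw [length_orbitWord] at hdm
  refine not_isPeriodicPt_of_pos_of_lt_minimalPeriod hd.ne' hdm ?_
  exact iterate_eq_self_of_orbitWord_eq hm hj (by rw [← rotate_orbitWord hj]; exact hrot)

theorem exists_eq_orbitWord_of_mem_rotations {x : List α}
    (hx : x ∈ rotations (cycleWord w j)) :
    ∃ i, IsPeriodicPt (tau w) (minimalPeriod (tau w) j) i ∧
      x = orbitWord w (minimalPeriod (tau w) j) i := by
  have hj := isPeriodicPt_minimalPeriod (tau w) j
  obtain ⟨t, -, rfl⟩ := List.mem_map.mp hx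
  exact ⟨_, hj.apply_iterate t, rotate_orbitWord hj t⟩

theorem isChain_bwt_cycleWord (hw : List.IsChain (· ≥ ·) w) :
    List.IsChain (· ≥ ·) (BWT (cycleWord w j)) := by
  have hanti : ∀ {r r' : Fin w.length}, r ≤ r' → w.get r' ≤ w.get r :=
    (List.isChain_iff_pairwise.mp hw).rel_get_of_le
  have hm := minimalPeriod_tau_pos j
  refine List.Pairwise.isChain (List.pairwise_filterMap.mpr
    ((List.pairwise_insertionSort _ _).imp_of_mem fun hx hy hxy b hb b' hb' => ?_))
  obtain ⟨i, hi, rfl⟩ :=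
    exists_eq_orbitWord_of_mem_rotations j ((List.perm_insertionSort _ _).mem_iff.mp hx)
  obtain ⟨i', hi', rfl⟩ :=
    exists_eq_orbitWord_of_mem_rotations j ((List.perm_insertionSort _ _).mem_iff.mp hy)
  rcases hxy.eq_or_lt with heq | hlt
  · rw [heq, hb'] at hb
    exact (Option.some_inj.mp hb).le
  · rw [getLast?_orbitWord hm hi, Option.some_inj] at hb
    rw [getLast?_orbitWord hm hi', Option.some_inj] at hb'
    rw [← hb, ← hb']
    exact hanti (stdPerm_le_of_orbitWord_lt hlt)

end CycleWord

theorem stmt11 [LinearOrder α] (w : List α) (hw : List.Chain' (· ≥ ·) w)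
    (j : Fin w.length) :
    PerfectlyClustering (cycleWord w j) :=
  ⟨isPrimitiveWord_cycleWord j, isChain_bwt_cycleWord j hw⟩
end

section
/- Every perfectly clustering word over a two-element ordered alphabet with a coprime number p of occurrences of the first letter and q of the second exists and is unique up to conjugacy; equivalently, for each pair (p,q) of nonnegative integers, there exists a perfectly clustering word with exactly p occurrences of x and q occurrences of y if and only if gcd(p,q) = 1. -/
/-!
Sort the rotations of a primitive word `w` lexicographically. Rotating by one letter maps the
rows that start with a letter `a`, in order, onto the rows that end with `a` (the LF property of
the Burrows–Wheeler transform). If `w` has `p` letters `x`, `q` letters `y` and is perfectly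
clustering, the rows starting with `x` are the first `p` and the rows ending with `x` the last
`p`, so rotation by one acts on row indices as `i ↦ i + q mod (p + q)`. Reading off first
letters, row `i` is the mechanical word `k ↦ [(k q + i) mod (p + q) ≥ p]`. Primitivity of `w`
then forces `gcd(p, q) = 1`, and all these words are rotations of the Christoffel word.
Conversely, the rotations of the Christoffel word are exactly these mechanical words, which
increase lexicographically with `i`; hence its BWT is `y^q x^p`.
-/

variable {α : Type*}

namespace List

theorem append_lt_append_of_lt_of_length_eq [LinearOrder α] {l₁ l₂ : List α} (h : l₁ < l₂)
    (hl : l₁.length = l₂.length) (t₁ t₂ : List α) : l₁ ++ t₁ < l₂ ++ t₂ := by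
  induction h with
  | nil => simp at hl
  | cons _ ih => exact Lex.cons (ih (by simpa using hl))
  | rel hab => exact Lex.rel hab

theorem rotate_one_lt_rotate_one [LinearOrder α] {a : α} {l₁ l₂ : List α}
    (h : a :: l₁ < a :: l₂) (hl : l₁.length = l₂.length) :
    (a :: l₁).rotate 1 < (a :: l₂).rotate 1 := by
  simpa [rotate_cons_succ] using
    append_lt_append_of_lt_of_length_eq (cons_lt_cons_self.mp h) hl [a] [a]

theorem rotate_eq_iterate (l : List α) (k : ℕ) : l.rotate k = (fun l => l.rotate 1)^[k] l := by
  induction k with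
  | zero => simp
  | succ k ih => rw [Function.iterate_succ_apply', ← ih, rotate_rotate]

theorem isPeriodicPt_rotate_one_iff {l : List α} {d : ℕ} :
    Function.IsPeriodicPt (fun l => l.rotate 1) d l ↔ l.rotate d = l := by
  rw [Function.IsPeriodicPt, Function.IsFixedPt, ← rotate_eq_iterate]

theorem getElem_eq_getElem_mod_of_rotate_eq_self {l : List α} {d j : ℕ} (h : l.rotate d = l)
    (hj : j < l.length) : l[j] = l[j % d]'((Nat.mod_le j d).trans_lt hj) := by
  have hper : l.rotate (d * (j / d)) = l :=
    isPeriodicPt_rotate_one_iff.mp ((isPeriodicPt_rotate_one_iff.mpr h).mul_const _)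
  have hmod : (j % d + d * (j / d)) % l.length = j := by
    rw [Nat.mod_add_div, Nat.mod_eq_of_lt hj]
  conv_rhs => rw [getElem_congr_coll hper.symm, getElem_rotate]
  exact getElem_congr_idx hmod.symm

theorem getElem_flatten_replicate (u : List α) (m j : ℕ)
    (hj : j < (replicate m u).flatten.length) :
    (replicate m u).flatten[j] = u[j % u.length]'(Nat.mod_lt _ (by
      rcases u with _ | _ <;> simp_all)) := by
  induction m generalizing j with
  | zero => simp at hj
  | succ m ih =>
    simp only [replicate_succ, flatten_cons]
    rcases lt_or_ge j u.length with hju | hju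
    · rw [getElem_append_left hju]
      exact getElem_congr_idx (Nat.mod_eq_of_lt hju).symm
    · rw [getElem_append_right hju, ih]
      exact getElem_congr_idx (Nat.mod_eq_sub_mod hju).symm

theorem eq_flatten_replicate_of_rotate_eq_self {l : List α} {d : ℕ} (hd : d ∣ l.length)
    (h : l.rotate d = l) : l = (replicate (l.length / d) (l.take d)).flatten := by
  rcases Nat.eq_zero_or_pos l.length with h0 | hpos
  · simp [length_eq_zero_iff.mp h0]
  have htake : (l.take d).length = d := length_take_of_le (Nat.le_of_dvd hpos hd)
  apply ext_getElem
  · simp [htake, Nat.div_mul_cancel hd]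
  · intro j h₁ h₂
    rw [getElem_flatten_replicate, getElem_eq_getElem_mod_of_rotate_eq_self h h₁, getElem_take]
    simp only [htake]

theorem eq_of_pairwise_lt_of_subset_of_length_le {β : Type*} [Preorder β] {l₁ l₂ : List β}
    (h₁ : l₁.Pairwise (· < ·)) (h₂ : l₂.Pairwise (· < ·)) (hsub : l₁ ⊆ l₂)
    (hlen : l₂.length ≤ l₁.length) : l₁ = l₂ :=
  (sublist_of_subperm_of_pairwise (subperm_of_subset h₁.nodup hsub) h₁ h₂).eq_of_length_le hlen

theorem getLast!_rotate_one [Inhabited α] {l : List α} (hl : l ≠ []) :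
    (l.rotate 1).getLast! = l.head! := by
  obtain ⟨a, l, rfl⟩ := exists_cons_of_ne_nil hl
  simp [rotate_cons_succ]

theorem head!_rotate [Inhabited α] {l : List α} {k : ℕ} (hk : k < l.length) :
    (l.rotate k).head! = l[k] := by
  simp [head!_eq_head?_getD, head?_rotate hk, getElem?_eq_getElem hk]

theorem filter_eq_take_of_map_eq_replicate_append {β γ : Type*} [DecidableEq γ] {R : List β}
    {f : β → γ} {a b : γ} {m k : ℕ} (hab : a ≠ b)
    (h : R.map f = replicate m a ++ replicate k b) :
    R.filter (f · = a) = R.take m ∧ R.filter (f · = b) = R.drop m := by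
  have htake : ∀ x ∈ R.take m, f x = a := fun x hx => eq_of_mem_replicate <| by
    rw [← take_left' (length_replicate ..), ← h, ← map_take]; exact mem_map_of_mem hx
  have hdrop : ∀ x ∈ R.drop m, f x = b := fun x hx => eq_of_mem_replicate <| by
    rw [← drop_left' (l₂ := replicate k b) (length_replicate ..), ← h, ← map_drop]
    exact mem_map_of_mem hx
  rw [← take_append_drop m R, filter_append, filter_append, take_append_drop,
    filter_eq_self.2 (by simpa using htake),
    filter_eq_nil_iff.2 fun x hx => by simp [hdrop x hx, hab.symm],
    filter_eq_nil_iff.2 fun x hx => by simp [htake x hx, hab],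
    filter_eq_self.2 (by simpa using hdrop)]
  simp

end List

open List

namespace Nat

theorem perm_map_range_mul_mod {q n : ℕ} (hq : n.Coprime q) :
    (range n).map (· * q % n) ~ range n := by
  rcases eq_zero_or_pos n with rfl | hn
  · simp
  have hinj : ∀ i ∈ range n, ∀ j ∈ range n, i * q % n = j * q % n → i = j := fun i hi j hj h =>
    (ModEq.cancel_right_of_coprime hq h).eq_of_lt_of_lt (mem_range.1 hi) (mem_range.1 hj)
  have hsub : (range n).map (· * q % n) ⊆ range n := fun x hx => by
    obtain ⟨i, -, rfl⟩ := mem_map.1 hx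
    exact mem_range.2 (mod_lt _ hn)
  exact (subperm_of_subset (nodup_range.map_on hinj) hsub).perm_of_length_le (by simp)

theorem Coprime.add_pos {p q : ℕ} (h : p.Coprime q) : 0 < p + q := by
  by_contra h0
  obtain ⟨rfl, rfl⟩ : p = 0 ∧ q = 0 := by omega
  simp at h

end Nat

namespace IsPrimitiveWord

variable {w : List α}

theorem eq_zero_of_rotate_eq_self (hw : IsPrimitiveWord w) {d : ℕ} (hd : d < w.length)
    (h : w.rotate d = w) : d = 0 := by
  have hg : w.rotate (d.gcd w.length) = w :=
    isPeriodicPt_rotate_one_iff.mp <| (isPeriodicPt_rotate_one_iff.mpr h).gcd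
      (isPeriodicPt_rotate_one_iff.mpr w.rotate_length)
  have hdvd : d.gcd w.length ∣ w.length := Nat.gcd_dvd_right _ _
  have hlen : d.gcd w.length = w.length :=
    Nat.eq_of_dvd_of_div_eq_one hdvd (hw.2 _ _ (eq_flatten_replicate_of_rotate_eq_self hdvd hg))
  exact Nat.eq_zero_of_dvd_of_lt (hlen ▸ Nat.gcd_dvd_left d w.length) hd

theorem rotate_inj (hw : IsPrimitiveWord w) {i j : ℕ} (hi : i < w.length) (hj : j < w.length)
    (h : w.rotate i = w.rotate j) : i = j := by
  wlog hij : i ≤ j generalizing i j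
  · exact (this hj hi h.symm (le_of_not_ge hij)).symm
  rcases hij.eq_or_lt with rfl | hlt
  · rfl
  have hrot : w.rotate (i + (w.length - j)) = w := by
    rw [← rotate_rotate, h, rotate_rotate, Nat.add_sub_cancel' hj.le, rotate_length]
  have := hw.eq_zero_of_rotate_eq_self (by omega) hrot
  omega

end IsPrimitiveWord

theorem isPrimitiveWord_of_coprime_count [DecidableEq α] {w : List α} (a b : α)
    (h : (w.count a).Coprime (w.count b)) : IsPrimitiveWord w := by
  refine ⟨by rintro rfl; simp at h, fun u k hw => ?_⟩
  have hcount : ∀ c, w.count c = k * u.count c := fun c => by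
    rw [hw, count_flatten, map_replicate, sum_replicate, smul_eq_mul]
  exact Nat.eq_one_of_dvd_coprimes h (hcount a ▸ dvd_mul_right k _)
    (hcount b ▸ dvd_mul_right k _)

section Rotations

variable {w x : List α}

@[simp]
theorem length_rotations : (rotations w).length = w.length := by
  simp [rotations]

theorem mem_rotations : x ∈ rotations w ↔ ∃ i < w.length, w.rotate i = x := by
  simp [rotations]

theorem rotate_mem_rotations (hw : w ≠ []) (i : ℕ) : w.rotate i ∈ rotations w :=
  mem_rotations.2 ⟨i % w.length, Nat.mod_lt _ (length_pos_iff.2 hw), rotate_mod w i⟩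

theorem rotate_one_mem_rotations (hx : x ∈ rotations w) : x.rotate 1 ∈ rotations w := by
  obtain ⟨i, hi, rfl⟩ := mem_rotations.1 hx
  rw [rotate_rotate]
  exact rotate_mem_rotations (ne_nil_of_length_pos (by omega)) _

theorem length_of_mem_rotations (hx : x ∈ rotations w) : x.length = w.length := by
  obtain ⟨i, -, rfl⟩ := mem_rotations.1 hx
  exact length_rotate w i

theorem ne_nil_of_mem_rotations (hx : x ∈ rotations w) : x ≠ [] := by
  obtain ⟨i, hi, rfl⟩ := mem_rotations.1 hx
  exact ne_nil_of_length_pos (by simp; omega)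

theorem IsPrimitiveWord.nodup_rotations (hw : IsPrimitiveWord w) : (rotations w).Nodup :=
  nodup_range.map_on fun _ hi _ hj h => hw.rotate_inj (mem_range.1 hi) (mem_range.1 hj) h

theorem map_head!_rotations [Inhabited α] : (rotations w).map head! = w := by
  refine ext_getElem (by simp [rotations]) fun i h₁ h₂ => ?_
  simp [rotations, head!_rotate h₂]

theorem map_getLast!_rotations [Inhabited α] (hw : w ≠ []) :
    (rotations w).map getLast! = w.rotate (w.length - 1) := by
  refine ext_getElem (by simp [rotations]) fun i h₁ h₂ => ?_
  have hpos : 0 < w.length := length_pos_iff.2 hw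
  simp [rotations, getLast!_eq_getLast?_getD, getLast?_eq_getElem?, getElem_rotate,
    getElem?_rotate (n := i) (Nat.sub_one_lt hpos.ne'), Nat.add_comm i,
    getElem?_eq_getElem (Nat.mod_lt _ hpos)]

end Rotations

section SortedRotations

variable [LinearOrder α] {w x : List α}

def sortedRotations (w : List α) : List (List α) :=
  insertionSort (· ≤ ·) (rotations w)

theorem sortedRotations_perm : sortedRotations w ~ rotations w :=
  perm_insertionSort _ _

@[simp]
theorem length_sortedRotations : (sortedRotations w).length = w.length := by
  rw [sortedRotations_perm.length_eq, length_rotations]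

theorem mem_sortedRotations : x ∈ sortedRotations w ↔ x ∈ rotations w :=
  sortedRotations_perm.mem_iff

theorem IsPrimitiveWord.pairwise_lt_sortedRotations (hw : IsPrimitiveWord w) :
    (sortedRotations w).Pairwise (· < ·) :=
  (sortedLE_insertionSort.sortedLT_of_nodup
    (sortedRotations_perm.nodup_iff.2 hw.nodup_rotations)).pairwise

theorem map_head!_sortedRotations_perm [Inhabited α] : (sortedRotations w).map head! ~ w :=
  (sortedRotations_perm.map _).trans (.of_eq map_head!_rotations)

theorem BWT_eq_map_getLast! [Inhabited α] : BWT w = (sortedRotations w).map getLast! := by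
  rw [BWT, ← filterMap_eq_map]
  refine filterMap_congr fun x hx => ?_
  simp [getLast?_eq_some_getLast (ne_nil_of_mem_rotations (mem_sortedRotations.1 hx))]

theorem BWT_perm (hw : w ≠ []) : BWT w ~ w := by
  have : Inhabited α := ⟨w.head hw⟩
  rw [BWT_eq_map_getLast!]
  exact (sortedRotations_perm.map _).trans ((Perm.of_eq (map_getLast!_rotations hw)).trans
    (rotate_perm _ _))

-- The LF property of the Burrows–Wheeler transform.
theorem IsPrimitiveWord.map_rotate_one_filter_sortedRotations [Inhabited α]
    (hw : IsPrimitiveWord w) (a : α) :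
    ((sortedRotations w).filter (·.head! = a)).map (·.rotate 1) =
      (sortedRotations w).filter (·.getLast! = a) := by
  have hR := hw.pairwise_lt_sortedRotations
  have hcount : ∀ f : List α → α, ((sortedRotations w).filter (f · = a)).length =
      ((sortedRotations w).map f).count a := fun f => by
    simp [count_eq_length_filter, filter_map, Function.comp_def, _root_.beq_eq_decide]
  refine eq_of_pairwise_lt_of_subset_of_length_le ?_ (hR.sublist filter_sublist) ?_ ?_
  · refine pairwise_map.2 ((hR.sublist filter_sublist).imp_of_mem fun hx hy hxy => ?_)
    simp only [mem_filter, decide_eq_true_eq, mem_sortedRotations] at hx hy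
    obtain ⟨b, l₁, rfl⟩ := exists_cons_of_ne_nil (ne_nil_of_mem_rotations hx.1)
    obtain ⟨c, l₂, rfl⟩ := exists_cons_of_ne_nil (ne_nil_of_mem_rotations hy.1)
    have hl := (length_of_mem_rotations hx.1).trans (length_of_mem_rotations hy.1).symm
    obtain rfl : b = a := hx.2
    obtain rfl : c = b := hy.2
    exact rotate_one_lt_rotate_one hxy (by simpa using hl)
  · intro y hy
    obtain ⟨x, hx, rfl⟩ := mem_map.1 hy
    simp only [mem_filter, decide_eq_true_eq, mem_sortedRotations] at hx ⊢
    exact ⟨rotate_one_mem_rotations hx.1,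
      (getLast!_rotate_one (ne_nil_of_mem_rotations hx.1)).trans hx.2⟩
  · rw [length_map, hcount, hcount, ← BWT_eq_map_getLast!, (BWT_perm hw.1).count_eq,
      map_head!_sortedRotations_perm.count_eq]

end SortedRotations

namespace Bool

theorem map_range_decide_le (p q : ℕ) :
    (range (p + q)).map (fun i => decide (p ≤ i)) = replicate p false ++ replicate q true := by
  rw [range_add, map_append, map_map]
  congr 1 <;> exact eq_replicate_iff.2 ⟨by simp, by simp⟩

theorem map_range_decide_lt (p q : ℕ) :
    (range (q + p)).map (fun i => decide (i < q)) = replicate q true ++ replicate p false := by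
  rw [range_add, map_append, map_map]
  congr 1 <;> exact eq_replicate_iff.2 ⟨by simp, by simp⟩

theorem perm_replicate_count (l : List Bool) (a : Bool) :
    l ~ replicate (l.count a) a ++ replicate (l.count !a) !a :=
  (perm_replicate_append_replicate (by cases a <;> decide)).2
    ⟨rfl, rfl, fun b _ => by cases a <;> cases b <;> simp⟩

theorem eq_replicate_append_replicate_of_pairwise_le {l : List Bool} (h : l.Pairwise (· ≤ ·)) :
    l = replicate (l.count false) false ++ replicate (l.count true) true :=
  (perm_replicate_count l false).eq_of_pairwise' h (by simp [pairwise_append, pairwise_replicate])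

theorem isChain_ge_iff {l : List Bool} :
    l.IsChain (· ≥ ·) ↔ l = replicate (l.count true) true ++ replicate (l.count false) false := by
  rw [isChain_iff_pairwise]
  refine ⟨fun h => (perm_replicate_count l true).eq_of_pairwise' h ?_, fun h => h ▸ ?_⟩ <;>
    simp [pairwise_append, pairwise_replicate]

end Bool

def mechanicalWord (p q m j : ℕ) : List Bool :=
  (range m).map fun k => decide (p ≤ (k * q + j) % (p + q))

-- The lower Christoffel word with `p` letters `x = false` and `q` letters `y = true`.
def christoffelWord (p q : ℕ) : List Bool :=
  mechanicalWord p q (p + q) 0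

section MechanicalWord

variable {p q m j : ℕ}

@[simp]
theorem length_mechanicalWord : (mechanicalWord p q m j).length = m := by
  simp [mechanicalWord]

@[simp]
theorem getElem_mechanicalWord {k : ℕ} (hk : k < (mechanicalWord p q m j).length) :
    (mechanicalWord p q m j)[k] = decide (p ≤ (k * q + j) % (p + q)) := by
  simp [mechanicalWord]

theorem mechanicalWord_mod : mechanicalWord p q m (j % (p + q)) = mechanicalWord p q m j := by
  simp [mechanicalWord, Nat.add_mod_mod]

theorem mechanicalWord_succ :
    mechanicalWord p q (m + 1) j = decide (p ≤ j % (p + q)) :: mechanicalWord p q m (j + q) := by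
  simp only [mechanicalWord, range_succ_eq_map, map_cons, map_map]
  congr 1
  · simp
  · refine map_congr_left fun k _ => ?_
    simp only [Function.comp_apply, Nat.succ_eq_add_one]
    rw [show (k + 1) * q + j = k * q + (j + q) by ring]

theorem mechanicalWord_rotate (i : ℕ) :
    (mechanicalWord p q (p + q) j).rotate i = mechanicalWord p q (p + q) (j + i * q) := by
  refine ext_getElem (by simp) fun k h₁ h₂ => ?_
  simp only [getElem_rotate, getElem_mechanicalWord, length_mechanicalWord]
  congr 2
  calc ((k + i) % (p + q) * q + j) % (p + q) = ((k + i) * q + j) % (p + q) :=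
        ((Nat.mod_modEq _ _).mul_right q).add_right j
    _ = (k * q + (j + i * q)) % (p + q) := by ring_nf

theorem head!_mechanicalWord (hj : j < p + q) :
    (mechanicalWord p q (p + q) j).head! = decide (p ≤ j) := by
  obtain ⟨n, hn⟩ := Nat.exists_eq_add_one_of_ne_zero (n := p + q) (by omega)
  rw [hn, mechanicalWord_succ, head!_cons, Nat.mod_eq_of_lt hj]

theorem getLast!_mechanicalWord (hj : j < p + q) :
    (mechanicalWord p q (p + q) j).getLast! = decide (j < q) := by
  have hrot : (mechanicalWord p q (p + q) ((j + p) % (p + q))).rotate 1 =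
      mechanicalWord p q (p + q) j := by
    rw [mechanicalWord_rotate, ← mechanicalWord_mod, Nat.mod_add_mod, one_mul,
      show j + p + q = j + (p + q) by ring, Nat.add_mod_right, Nat.mod_eq_of_lt hj]
  rw [← hrot, getLast!_rotate_one (ne_nil_of_length_pos (by simp; omega)),
    head!_mechanicalWord (Nat.mod_lt _ (by omega))]
  rcases lt_or_ge j q with hjq | hqj
  · rw [Nat.mod_eq_of_lt (by omega), decide_eq_true (by omega), decide_eq_true hjq]
  · rw [show j + p = j - q + (p + q) by omega, Nat.add_mod_right, Nat.mod_eq_of_lt (by omega),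
      decide_eq_false (by omega), decide_eq_false (by omega)]

theorem mechanicalWord_mono {j' : ℕ} (hjj' : j ≤ j') (hj' : j' < p + q) :
    mechanicalWord p q m j ≤ mechanicalWord p q m j' := by
  induction m generalizing j j' with
  | zero => exact le_rfl
  | succ m ih =>
    have hshift : ∀ i, p ≤ i → i < p + q → (i + q) % (p + q) = i - p := fun i h₁ h₂ => by
      rw [show i + q = i - p + (p + q) by omega, Nat.add_mod_right, Nat.mod_eq_of_lt (by omega)]
    rw [mechanicalWord_succ, mechanicalWord_succ, Nat.mod_eq_of_lt (hjj'.trans_lt hj'),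
      Nat.mod_eq_of_lt hj']
    rcases lt_or_ge j' p with hj'p | hpj'
    · rw [decide_eq_false (by omega), decide_eq_false (by omega)]
      exact cons_le_cons _ (ih (j := j + q) (j' := j' + q) (by omega) (by omega))
    rcases lt_or_ge j p with hjp | hpj
    · rw [decide_eq_false (by omega), decide_eq_true hpj']
      exact le_of_lt (Lex.rel (by decide))
    · rw [decide_eq_true hpj, decide_eq_true hpj', ← mechanicalWord_mod (j := j + q),
        ← mechanicalWord_mod (j := j' + q), hshift j hpj (by omega), hshift j' hpj' hj']
      exact cons_le_cons _ (ih (j := j - p) (j' := j' - p) (by omega) (by omega))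

theorem eq_map_mechanicalWord {R : List (List Bool)} (hlen : R.length = p + q)
    (hrow : ∀ x ∈ R, x.length = p + q)
    (hhead : R.map head! = (range (p + q)).map fun i => decide (p ≤ i))
    (hrot : R.map (·.rotate 1) = R.rotate q) :
    R = (range (p + q)).map (mechanicalWord p q (p + q)) := by
  have hrotk : ∀ k, R.map (·.rotate k) = R.rotate (k * q) := by
    intro k
    induction k with
    | zero => simp
    | succ k ih =>
      calc R.map (·.rotate (k + 1)) = (R.map (·.rotate k)).map (·.rotate 1) := by
            simp [Function.comp_def, rotate_rotate]
        _ = R.rotate ((k + 1) * q) := by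
            rw [ih, map_rotate, hrot, rotate_rotate, Nat.succ_mul, Nat.add_comm]
  have hhead' : ∀ i (hi : i < R.length), R[i].head! = decide (p ≤ i) := fun i hi => by
    simpa [hi, hlen ▸ hi] using congrArg (·[i]?) hhead
  refine ext_getElem (by simp [hlen]) fun i h₁ h₂ =>
    ext_getElem (by simp [hrow _ (getElem_mem _)]) fun k hk₁ hk₂ => ?_
  have hrow_k : R[i].rotate k = (R.rotate (k * q))[i]'(by simpa using h₁) := by
    simp [← hrotk]
  rw [← head!_rotate hk₁, hrow_k, getElem_rotate, hhead']
  simp [hlen, Nat.add_comm]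

theorem coprime_of_isPrimitiveWord_mechanicalWord (hj : j < p + q)
    (hw : IsPrimitiveWord (mechanicalWord p q (p + q) j)) : p.Coprime q := by
  obtain ⟨a, ha⟩ := Nat.gcd_dvd_right p q
  obtain ⟨b, hb⟩ := Nat.dvd_add (Nat.gcd_dvd_left p q) (Nat.gcd_dvd_right p q)
  have hrot : (mechanicalWord p q (p + q) j).rotate b = mechanicalWord p q (p + q) j := by
    rw [mechanicalWord_rotate, ← mechanicalWord_mod,
      show b * q = (p + q) * a by rw [hb, mul_comm (p.gcd q) b, mul_assoc, ← ha],
      Nat.add_mul_mod_self_left, Nat.mod_eq_of_lt hj]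
  have hb0 : 0 < b := Nat.pos_of_ne_zero (by rintro rfl; omega)
  by_contra hne
  have hg : 1 < p.gcd q := by
    have : p.gcd q ≠ 0 := fun h => by rw [Nat.gcd_eq_zero_iff] at h; omega
    have : p.gcd q ≠ 1 := hne
    omega
  have := hw.eq_zero_of_rotate_eq_self
    (by simpa [hb] using (Nat.lt_mul_iff_one_lt_left hb0).2 hg) hrot
  omega

theorem christoffelWord_isRotated_mechanicalWord (h : p.Coprime q) :
    (christoffelWord p q).IsRotated (mechanicalWord p q (p + q) j) := by
  obtain ⟨m, -, hm⟩ := Nat.exists_mul_mod_eq_of_coprime (n := q) j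
    (by simpa [Nat.coprime_add_self_right] using h.symm) h.add_pos.ne'
  refine ⟨m, ?_⟩
  rw [christoffelWord, mechanicalWord_rotate, ← mechanicalWord_mod, zero_add, Nat.mul_comm, hm,
    mechanicalWord_mod]

end MechanicalWord

section ChristoffelWord

variable {p q : ℕ}

theorem sortedRotations_christoffelWord (h : p.Coprime q) :
    sortedRotations (christoffelWord p q) = (range (p + q)).map (mechanicalWord p q (p + q)) := by
  have hperm :
      rotations (christoffelWord p q) ~ (range (p + q)).map (mechanicalWord p q (p + q)) := by
    have : rotations (christoffelWord p q) =
        ((range (p + q)).map (· * q % (p + q))).map (mechanicalWord p q (p + q)) := by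
      simp [rotations, christoffelWord, mechanicalWord_rotate, mechanicalWord_mod]
    rw [this]
    exact (Nat.perm_map_range_mul_mod (by simpa [Nat.coprime_add_self_left] using h)).map _
  refine (sortedRotations_perm.trans hperm).eq_of_pairwise' (pairwise_insertionSort _ _) ?_
  exact pairwise_map.2 (pairwise_lt_range.imp_of_mem fun _ hj hij =>
    mechanicalWord_mono hij.le (mem_range.1 hj))

theorem BWT_christoffelWord (h : p.Coprime q) :
    BWT (christoffelWord p q) = replicate q true ++ replicate p false := by
  rw [BWT_eq_map_getLast!, sortedRotations_christoffelWord h, map_map,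
    ← Bool.map_range_decide_lt, Nat.add_comm q p]
  exact map_congr_left fun j hj => getLast!_mechanicalWord (mem_range.1 hj)

theorem count_christoffelWord (h : p.Coprime q) :
    (christoffelWord p q).count false = p ∧ (christoffelWord p q).count true = q := by
  have hne : christoffelWord p q ≠ [] :=
    ne_nil_of_length_pos (by simpa [christoffelWord] using h.add_pos)
  have := (BWT_perm hne).count_eq
  rw [BWT_christoffelWord h] at this
  simp [← this, count_replicate]

theorem christoffelWord_perfectlyClustering (h : p.Coprime q) :
    PerfectlyClustering (christoffelWord p q) := by
  obtain ⟨hp, hq⟩ := count_christoffelWord h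
  refine ⟨isPrimitiveWord_of_coprime_count false true (by rwa [hp, hq]), ?_⟩
  rw [BWT_christoffelWord h]
  exact Bool.isChain_ge_iff.2 (by simp [count_replicate])

end ChristoffelWord

theorem map_head!_sortedRotations (w : List Bool) :
    (sortedRotations w).map head! =
      replicate (w.count false) false ++ replicate (w.count true) true := by
  have hsorted : ((sortedRotations w).map head!).Pairwise (· ≤ ·) :=
    pairwise_map.2 <| (pairwise_insertionSort _ _).imp_of_mem fun hx _ hxy =>
      hxy.lt_or_eq.elim (head!_le_of_lt _ _ · (ne_nil_of_mem_rotations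
        (mem_sortedRotations.1 hx))) (fun h => h ▸ le_rfl)
  rw [Bool.eq_replicate_append_replicate_of_pairwise_le hsorted,
    map_head!_sortedRotations_perm.count_eq, map_head!_sortedRotations_perm.count_eq]

namespace PerfectlyClustering

variable {w : List Bool}

theorem map_getLast!_sortedRotations (hw : PerfectlyClustering w) :
    (sortedRotations w).map getLast! =
      replicate (w.count true) true ++ replicate (w.count false) false := by
  rw [← BWT_eq_map_getLast!, Bool.isChain_ge_iff.1 hw.2, (BWT_perm hw.1.1).count_eq,
    (BWT_perm hw.1.1).count_eq]

theorem map_rotate_one_sortedRotations (hw : PerfectlyClustering w) :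
    (sortedRotations w).map (·.rotate 1) = (sortedRotations w).rotate (w.count true) := by
  obtain ⟨hf, ht⟩ := filter_eq_take_of_map_eq_replicate_append (by decide)
    (map_head!_sortedRotations w)
  obtain ⟨ht', hf'⟩ := filter_eq_take_of_map_eq_replicate_append (by decide)
    hw.map_getLast!_sortedRotations
  conv_lhs => rw [← take_append_drop (w.count false) (sortedRotations w)]
  rw [map_append, ← hf, ← ht, hw.1.map_rotate_one_filter_sortedRotations,
    hw.1.map_rotate_one_filter_sortedRotations, hf', ht', rotate_eq_drop_append_take]
  rw [length_sortedRotations, ← count_false_add_count_true w]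
  exact Nat.le_add_left _ _

theorem sortedRotations_eq (hw : PerfectlyClustering w) :
    sortedRotations w = (range (w.count false + w.count true)).map
      (mechanicalWord (w.count false) (w.count true) (w.count false + w.count true)) := by
  have hn := count_false_add_count_true w
  refine eq_map_mechanicalWord (by simp [hn]) (fun x hx => ?_) ?_
    hw.map_rotate_one_sortedRotations
  · rw [hn, length_of_mem_rotations (mem_sortedRotations.1 hx)]
  · rw [map_head!_sortedRotations, Bool.map_range_decide_le]

theorem coprime_and_isRotated (hw : PerfectlyClustering w) :
    (w.count false).Coprime (w.count true) ∧
      (christoffelWord (w.count false) (w.count true)).IsRotated w := by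
  have hw' : w ∈ sortedRotations w :=
    mem_sortedRotations.2 (by simpa using rotate_mem_rotations hw.1.1 0)
  rw [hw.sortedRotations_eq, mem_map] at hw'
  obtain ⟨j, hj, hwj⟩ := hw'
  have hcop :=
    coprime_of_isPrimitiveWord_mechanicalWord (mem_range.1 hj) (by rw [hwj]; exact hw.1)
  have hrot := christoffelWord_isRotated_mechanicalWord (j := j) hcop
  rw [hwj] at hrot
  exact ⟨hcop, hrot⟩

end PerfectlyClustering

theorem stmt14 (p q : ℕ) :
    ((∃ w : List Bool, PerfectlyClustering w ∧
        w.count false = p ∧ w.count true = q) ↔ Nat.gcd p q = 1) ∧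
    (∀ w w' : List Bool, PerfectlyClustering w → PerfectlyClustering w' →
      w.count false = p → w.count true = q →
      w'.count false = p → w'.count true = q → List.IsRotated w w') := by
  refine ⟨⟨?_, fun h => ⟨christoffelWord p q, christoffelWord_perfectlyClustering h,
    count_christoffelWord h⟩⟩, ?_⟩
  · rintro ⟨w, hw, rfl, rfl⟩
    exact hw.coprime_and_isRotated.1
  · rintro w w' hw hw' rfl rfl hp hq
    have hrot' := hw'.coprime_and_isRotated.2
    rw [hp, hq] at hrot'
    exact hw.coprime_and_isRotated.2.symm.trans hrot'
end

section
/- Let w be a perfectly clustering word over a totally ordered alphabet. Then w is conjugate to its reversal. -/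
variable {α : Type*}

/-! Index the rotations of `w` by their starting position `k : ZMod n`, so that the row starting
at `k` begins with `w k` and ends with `w (k - 1)`, and let `ρ k` be its rank among the (pairwise
distinct, by primitivity) rotations. The first column of the sorted matrix increases and, by
perfect clustering, the last column decreases; both list the letters of `w`, so the row of rank
`n - 1 - ρ k` begins with `w (k - 1)`. Writing `mirror k` for that row, `k ↦ mirror (k - 1)`
preserves last letters and reverses the order of rows with a common last letter (the usual
LF-mapping property of sorted rotations), so its square is a rank-preserving permutation, i.e. the
identity. Hence `mirror k = c - k` for a constant `c`, so `w (c - k) = w (k - 1)` for all `k`,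
which says that `w.reverse` is the rotation of `w` starting at `c`. -/

theorem exists_equiv_fin_strictMono {ι β : Type*} [Fintype ι] [LinearOrder β] {n : ℕ}
    (hn : Fintype.card ι = n) {g : ι → β} (hg : Function.Injective g) :
    ∃ ρ : ι ≃ Fin n, StrictMono (g ∘ ρ.symm) := by
  let := LinearOrder.lift' g hg
  exact ⟨(Fintype.orderIsoFinOfCardEq ι hn).symm.toEquiv,
    fun _ _ hij => (Fintype.orderIsoFinOfCardEq ι hn).strictMono hij⟩

namespace List

theorem exists_eq_flatten_replicate_of_append_comm {u v : List α} (h : u ++ v = v ++ u) :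
    ∃ (t : List α) (k m : ℕ), u = (replicate k t).flatten ∧ v = (replicate m t).flatten := by
  rcases eq_or_ne u [] with rfl | hu
  · exact ⟨v, 0, 1, by simp, by simp⟩
  rcases eq_or_ne v [] with rfl | hv
  · exact ⟨u, 1, 0, by simp, by simp⟩
  rcases append_eq_append_iff.1 h with ⟨s, rfl, hs⟩ | ⟨s, rfl, hs⟩
  · obtain ⟨t, k, m, rfl, rfl⟩ := exists_eq_flatten_replicate_of_append_comm hs
    exact ⟨t, k, k + m, rfl, by rw [replicate_add, flatten_append]⟩
  · obtain ⟨t, k, m, rfl, rfl⟩ := exists_eq_flatten_replicate_of_append_comm hs.symm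
    exact ⟨t, m + k, m, by rw [replicate_add, flatten_append], rfl⟩
termination_by u.length + v.length
decreasing_by
  all_goals
    subst_vars
    simp only [length_append]
  · have := length_pos_iff.2 hu; omega
  · have := length_pos_iff.2 hv; omega

theorem append_lt_append_of_length_eq [LT α] {s t : List α} (hlen : s.length = t.length)
    (h : s < t) (u v : List α) : s ++ u < t ++ v := by
  induction h with
  | nil => simp at hlen
  | rel hab => exact Lex.rel hab
  | cons _ ih => exact Lex.cons (ih (by simpa using hlen))

theorem lt_of_append_lt_append_of_length_eq [LinearOrder α] {s t u : List α}
    (hlen : s.length = t.length) (h : s ++ u < t ++ u) : s < t := by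
  rcases lt_trichotomy s t with hst | rfl | hts
  · exact hst
  · exact absurd h (lt_irrefl _)
  · exact absurd h (append_lt_append_of_length_eq hlen.symm hts u u).asymm

end List

theorem IsPrimitiveWord.eq_zero_of_rotate_eq_self_s15 {w : List α} (hw : IsPrimitiveWord w) {d : ℕ}
    (hd : d < w.length) (h : w.rotate d = w) : d = 0 := by
  rw [List.rotate_eq_drop_append_take hd.le] at h
  obtain ⟨t, k, m, hk, hm⟩ := List.exists_eq_flatten_replicate_of_append_comm
    (u := w.take d) (v := w.drop d) (by rw [List.take_append_drop, h])
  have hkm := hw.2 t (k + m) (by rw [List.replicate_add, List.flatten_append, ← hk, ← hm,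
    List.take_append_drop])
  obtain rfl | rfl : k = 0 ∨ m = 0 := by omega
  · simpa [hw.1] using hk
  · simp at hm
    omega

namespace List

section Rotation

variable (w : List α)

def rotation (k : ZMod w.length) : List α := w.rotate k.val

@[simp]
theorem length_rotation (k : ZMod w.length) : (w.rotation k).length = w.length :=
  length_rotate ..

theorem rotation_natCast (i : ℕ) : w.rotation i = w.rotate i := by
  rw [rotation, ZMod.val_natCast, rotate_mod]

variable [NeZero w.length]

def letter (k : ZMod w.length) : α := w[k.val]'(ZMod.val_lt k)

theorem letter_natCast {i : ℕ} (hi : i < w.length) : w.letter i = w[i] := by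
  simp only [letter, ZMod.val_cast_of_lt hi]

theorem getElem_rotation (k : ZMod w.length) {j : ℕ} (hj : j < (w.rotation k).length) :
    (w.rotation k)[j] = w.letter (k + j) := by
  rw [length_rotation] at hj
  simp only [rotation, letter, getElem_rotate, ZMod.val_add, ZMod.val_cast_of_lt hj, add_comm]

theorem rotation_add (k l : ZMod w.length) :
    w.rotation (k + l) = (w.rotation k).rotate l.val := by
  rw [rotation, rotation, rotate_rotate, ZMod.val_add, rotate_mod]

theorem exists_rotation_eq_cons (k : ZMod w.length) :
    ∃ t, w.rotation k = w.letter k :: t ∧ w.rotation (k + 1) = t ++ [w.letter k] := by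
  obtain ⟨a, t, hat⟩ := exists_cons_of_ne_nil (ne_nil_of_length_pos (by
    simpa using NeZero.pos w.length) : w.rotation k ≠ [])
  have ha : a = w.letter k := by
    simpa [hat] using w.getElem_rotation k (j := 0) (by simp [hat])
  refine ⟨t, ha ▸ hat, ?_⟩
  rw [rotation_add, ZMod.val_one_eq_one_mod, ← length_rotation w k, rotate_mod, hat, ha]
  simp

theorem rotation_injective (hw : IsPrimitiveWord w) : Function.Injective w.rotation := by
  intro k l hkl
  have hrot : w.rotate (k - l).val = w :=
    calc w.rotation (k - l) = (w.rotation k).rotate (-l).val := by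
          rw [sub_eq_add_neg, rotation_add]
      _ = w := by rw [hkl, ← rotation_add, add_neg_cancel, rotation, ZMod.val_zero, rotate_zero]
  rw [← sub_eq_zero, ← ZMod.val_eq_zero]
  exact hw.eq_zero_of_rotate_eq_self_s15 (ZMod.val_lt _) hrot

theorem mem_rotations {x : List α} : x ∈ rotations w ↔ ∃ k, w.rotation k = x := by
  simp only [rotations, mem_map, mem_range]
  constructor
  · rintro ⟨i, -, rfl⟩
    exact ⟨i, w.rotation_natCast i⟩
  · rintro ⟨k, rfl⟩
    exact ⟨k.val, ZMod.val_lt k, by rw [← rotation_natCast, ZMod.natCast_zmod_val]⟩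

theorem nodup_rotations (hw : IsPrimitiveWord w) : (rotations w).Nodup := by
  refine nodup_range.map_on fun i hi j hj hij => ?_
  rw [← rotation_natCast, ← rotation_natCast] at hij
  simpa [ZMod.val_cast_of_lt (mem_range.1 hi), ZMod.val_cast_of_lt (mem_range.1 hj)]
    using congrArg ZMod.val (w.rotation_injective hw hij)

theorem reverse_eq_rotation {c : ZMod w.length}
    (hc : ∀ k, w.letter (c - k) = w.letter (k - 1)) : w.reverse = w.rotation c := by
  refine ext_getElem (by simp) fun j hj _ => ?_
  rw [length_reverse] at hj
  rw [getElem_rotation, ← sub_neg_eq_add, hc, getElem_reverse, ← letter_natCast]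
  congr 1
  push_cast [Nat.cast_sub (Nat.le_sub_one_of_lt hj), Nat.cast_sub (NeZero.one_le : 1 ≤ w.length),
    ZMod.natCast_self]
  ring

end Rotation

end List

section Rank

variable {n : ℕ}

/-- `ρ k` stands for the rank, among the rotations of the cyclic word `f`, of the rotation starting
at `k`, which begins with `f k` and ends with `f (k - 1)`. -/
structure IsPerfectlyClusteringRank [LinearOrder α] (f : ZMod n → α) (ρ : ZMod n ≃ Fin n) :
    Prop where
  le_of_rank_lt : ∀ k l, ρ k < ρ l → f k ≤ f l
  sub_one_ge_of_rank_lt : ∀ k l, ρ k < ρ l → f (l - 1) ≤ f (k - 1)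
  rank_sub_one_lt : ∀ k l, ρ k < ρ l → f (k - 1) = f (l - 1) → ρ (k - 1) < ρ (l - 1)

def mirror (ρ : ZMod n ≃ Fin n) (k : ZMod n) : ZMod n := ρ.symm (ρ k).rev

@[simp]
theorem rank_mirror (ρ : ZMod n ≃ Fin n) (k : ZMod n) : ρ (mirror ρ k) = (ρ k).rev := by
  simp [mirror]

@[simp]
theorem mirror_mirror (ρ : ZMod n ≃ Fin n) (k : ZMod n) : mirror ρ (mirror ρ k) = k := by
  simp [mirror]

namespace IsPerfectlyClusteringRank

variable [LinearOrder α] {f : ZMod n → α} {ρ : ZMod n ≃ Fin n}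

theorem sub_one_ge_of_rank_le (h : IsPerfectlyClusteringRank f ρ) {k l : ZMod n}
    (hkl : ρ k ≤ ρ l) : f (l - 1) ≤ f (k - 1) := by
  rcases hkl.lt_or_eq with hlt | heq
  · exact h.sub_one_ge_of_rank_lt k l hlt
  · rw [ρ.injective heq]

theorem apply_mirror (h : IsPerfectlyClusteringRank f ρ) (k : ZMod n) :
    f (mirror ρ k) = f (k - 1) := by
  let τ : Equiv.Perm (Fin n) := Fin.revPerm.trans (ρ.symm.trans ((Equiv.subRight 1).trans ρ))
  have hfirst : Monotone ((f ∘ ρ.symm) ∘ ⇑(1 : Equiv.Perm (Fin n))) :=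
    monotone_iff_forall_lt.2 fun i j hij =>
      h.le_of_rank_lt _ _ (by simpa using hij)
  have hlast : Monotone ((f ∘ ρ.symm) ∘ τ) :=
    monotone_iff_forall_lt.2 fun i j hij => by
      simpa [τ] using h.sub_one_ge_of_rank_lt (ρ.symm j.rev) (ρ.symm i.rev) (by simpa using hij)
  simpa [τ, mirror] using congrFun (Tuple.unique_monotone hfirst hlast) (ρ k).rev

theorem apply_mirror_sub_one_sub_one (h : IsPerfectlyClusteringRank f ρ) (k : ZMod n) :
    f (mirror ρ (k - 1) - 1) = f (k - 1) := by
  rw [← h.apply_mirror, mirror_mirror]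

theorem rank_mirror_sub_one_lt (h : IsPerfectlyClusteringRank f ρ) {k l : ZMod n}
    (hkl : ρ k < ρ l) (he : f (k - 1) = f (l - 1)) :
    ρ (mirror ρ (l - 1)) < ρ (mirror ρ (k - 1)) := by
  simpa using h.rank_sub_one_lt k l hkl he

theorem strictMono_mirror_sub_one_twice (h : IsPerfectlyClusteringRank f ρ) :
    StrictMono fun i => ρ (mirror ρ (mirror ρ (ρ.symm i - 1) - 1)) := by
  intro i j hij
  obtain ⟨k, rfl⟩ := ρ.surjective i
  obtain ⟨l, rfl⟩ := ρ.surjective j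
  simp only [Equiv.symm_apply_apply] at hij ⊢
  rcases (h.sub_one_ge_of_rank_lt k l hij).eq_or_lt with he | hlt
  · refine h.rank_mirror_sub_one_lt (h.rank_mirror_sub_one_lt hij he.symm) ?_
    rw [h.apply_mirror_sub_one_sub_one, h.apply_mirror_sub_one_sub_one, he]
  · refine lt_of_not_ge fun hle => hlt.not_ge ?_
    simpa only [h.apply_mirror_sub_one_sub_one] using h.sub_one_ge_of_rank_le hle

theorem mirror_add_one (h : IsPerfectlyClusteringRank f ρ) (k : ZMod n) :
    mirror ρ (k + 1) = mirror ρ k - 1 := by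
  have hid := congrFun h.strictMono_mirror_sub_one_twice.eq_id (ρ (k + 1))
  simp only [Equiv.symm_apply_apply, add_sub_cancel_right, id] at hid
  rw [← ρ.injective hid, mirror_mirror]

theorem mirror_eq_sub [NeZero n] (h : IsPerfectlyClusteringRank f ρ) (k : ZMod n) :
    mirror ρ k = mirror ρ 0 - k := by
  obtain ⟨m, rfl⟩ := ZMod.natCast_zmod_surjective k
  induction m with
  | zero => simp
  | succ m ih => rw [Nat.cast_succ, h.mirror_add_one, ih, sub_sub]

theorem exists_apply_sub_eq [NeZero n] (h : IsPerfectlyClusteringRank f ρ) :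
    ∃ c, ∀ k, f (c - k) = f (k - 1) :=
  ⟨mirror ρ 0, fun k => by rw [← h.mirror_eq_sub, h.apply_mirror]⟩

end IsPerfectlyClusteringRank

end Rank

namespace List

section BurrowsWheeler

variable [LinearOrder α] (w : List α) [NeZero w.length]

theorem insertionSort_rotations (hw : IsPrimitiveWord w) {ρ : ZMod w.length ≃ Fin w.length}
    (hρ : StrictMono (w.rotation ∘ ρ.symm)) :
    (rotations w).insertionSort (· ≤ ·) = ofFn (w.rotation ∘ ρ.symm) := by
  refine Pairwise.eq_of_mem_iff (r := (· < ·)) ?_ (pairwise_ofFn.2 fun _ _ hij => hρ hij) ?_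
  · exact ((pairwise_insertionSort _ _).and
      ((perm_insertionSort _ _).nodup_iff.2 (w.nodup_rotations hw))).imp fun h => h.1.lt_of_ne h.2
  · intro x
    rw [(perm_insertionSort _ _).mem_iff, mem_rotations, mem_ofFn, ρ.symm.surjective.exists]
    rfl

theorem bwt_eq_ofFn (hw : IsPrimitiveWord w) {ρ : ZMod w.length ≃ Fin w.length}
    (hρ : StrictMono (w.rotation ∘ ρ.symm)) :
    BWT w = ofFn fun i => w.letter (ρ.symm i - 1) := by
  have hlast : ∀ k, (w.rotation k).getLast? = some (w.letter (k - 1)) := fun k => by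
    obtain ⟨t, -, ht⟩ := w.exists_rotation_eq_cons (k - 1)
    rw [sub_add_cancel] at ht
    rw [ht, getLast?_concat]
  rw [BWT, w.insertionSort_rotations hw hρ, ← map_ofFn, filterMap_map,
    show getLast? ∘ w.rotation = fun k => some (w.letter (k - 1)) from funext hlast,
    filterMap_eq_map', map_ofFn]
  rfl

theorem isPerfectlyClusteringRank_letter (hw : PerfectlyClustering w) {ρ : ZMod w.length ≃ Fin w.length}
    (hρ : StrictMono (w.rotation ∘ ρ.symm)) : IsPerfectlyClusteringRank w.letter ρ := by
  have hrank : ∀ k l, ρ k < ρ l ↔ w.rotation k < w.rotation l := fun k l => by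
    simpa using (hρ.lt_iff_lt (a := ρ k) (b := ρ l)).symm
  refine ⟨fun k l hkl => ?_, fun k l hkl => ?_, fun k l hkl he => ?_⟩
  · obtain ⟨s, hs, -⟩ := w.exists_rotation_eq_cons k
    obtain ⟨t, ht, -⟩ := w.exists_rotation_eq_cons l
    rw [hrank, hs, ht] at hkl
    exact head_le_of_lt hkl
  · have hbwt := isChain_iff_pairwise.1 hw.2
    rw [w.bwt_eq_ofFn hw.1 hρ, pairwise_ofFn] at hbwt
    simpa using hbwt hkl
  · obtain ⟨s, hs, hs'⟩ := w.exists_rotation_eq_cons (k - 1)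
    obtain ⟨t, ht, ht'⟩ := w.exists_rotation_eq_cons (l - 1)
    rw [sub_add_cancel] at hs' ht'
    rw [hrank, hs', ht', he] at hkl
    rw [hrank, hs, ht, he, cons_lt_cons_self]
    refine lt_of_append_lt_append_of_length_eq ?_ hkl
    have hs_len := congrArg length hs
    have ht_len := congrArg length ht
    simp only [length_rotation, length_cons] at hs_len ht_len
    omega

end BurrowsWheeler

end List

theorem stmt15 [LinearOrder α] (w : List α) (hw : PerfectlyClustering w) :
    List.IsRotated w w.reverse := by
  have : NeZero w.length := ⟨List.length_pos_iff.2 hw.1.1 |>.ne'⟩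
  obtain ⟨ρ, hρ⟩ := exists_equiv_fin_strictMono (ZMod.card _) (w.rotation_injective hw.1)
  obtain ⟨c, hc⟩ := (w.isPerfectlyClusteringRank_letter hw hρ).exists_apply_sub_eq
  exact ⟨c.val, (w.reverse_eq_rotation hc).symm⟩
end

section
/- Vectors v ∈ ℤ^4 with coordinate sum 0 whose first coordinate is 0 (or whose last coordinate is 0), together with (-1,1,-1,1), generate the lattice of all integer vectors in the plane they span: precisely, if v ∈ ℤ^4 has coordinate sum zero and first coordinate zero, and v generates the group of lattice points on its line, then {v, (-1,1,-1,1)} is a ℤ-basis of ℤ^4 ∩ span_ℚ{v, (-1,1,-1,1)}. -/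
/-!
Write `w = (-1, 1, -1, 1)` and pick a coordinate `k` with `v k = 0`; there `w k = ±1`.
If `x = a v + b w` over `ℚ`, reading off coordinate `k` gives `b = ± x k ∈ ℤ`.
Then `a v = x - b w` is integral, so the denominator of `a` divides every coordinate of `v`,
and primitivity of `v` forces `a ∈ ℤ`.
Uniqueness holds because `v ≠ 0` vanishes at `k` while `w` does not.
-/

section

variable {ι : Type*}

theorem Rat.den_eq_one_of_mul_primitive {v : ι → ℤ}
    (hprim : ∀ (m : ℤ) (u : ι → ℤ), v = m • u → IsUnit m) {q : ℚ} {y : ι → ℤ}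
    (h : ∀ i, q * v i = y i) : q.den = 1 := by
  have hdvd : ∀ i, (q.den : ℤ) ∣ v i := by
    intro i
    have hnum : q.num * v i = y i * q.den := by
      have : (q.num : ℚ) * v i = y i * q.den := by
        rw [← Rat.mul_den_eq_num, mul_right_comm, h i]
      exact_mod_cast this
    have hcop : IsCoprime (q.den : ℤ) q.num := by
      rw [Int.isCoprime_iff_gcd_eq_one, Int.gcd_comm]
      exact q.reduced
    exact hcop.dvd_of_dvd_mul_left (hnum ▸ dvd_mul_left _ _)
  have hunit := hprim q.den (fun i => v i / q.den) <| funext fun i =>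
    (Int.mul_ediv_cancel' (hdvd i)).symm
  simpa using Int.isUnit_iff_natAbs_eq.1 hunit

theorem ne_zero_of_primitive {v : ι → ℤ}
    (hprim : ∀ (m : ℤ) (u : ι → ℤ), v = m • u → IsUnit m) : v ≠ 0 := by
  rintro rfl
  exact not_isUnit_zero (hprim 0 0 (smul_zero 0).symm)

theorem smul_add_smul_injective_of_apply_eq_zero {R : Type*} [Ring R] [NoZeroDivisors R]
    {v w : ι → R} (hv : v ≠ 0) {k : ι} (hvk : v k = 0) (hwk : w k ≠ 0) :
    Function.Injective fun c : R × R => c.1 • v + c.2 • w := by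
  rintro ⟨a, b⟩ ⟨c, d⟩ h
  have hbd : b = d := by
    simpa [hvk, hwk] using congrFun h k
  subst hbd
  have hac : (a - c) • v = 0 := by
    rw [sub_smul, sub_eq_zero]
    simpa using h
  rw [smul_eq_zero_iff_left hv, sub_eq_zero] at hac
  rw [hac]

theorem exists_int_coeffs_of_mem_span_pair {v w x : ι → ℤ}
    (hprim : ∀ (m : ℤ) (u : ι → ℤ), v = m • u → IsUnit m) {k : ι} (hvk : v k = 0)
    (hwk : IsUnit (w k))
    (hx : (fun i => (x i : ℚ)) ∈
      Submodule.span ℚ ({fun i => (v i : ℚ), fun i => (w i : ℚ)} : Set (ι → ℚ))) :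
    ∃ c : ℤ × ℤ, x = c.1 • v + c.2 • w := by
  obtain ⟨a, b, hab⟩ := Submodule.mem_span_pair.1 hx
  have hcoord (i : ι) : a * v i + b * w i = x i := by simpa using congrFun hab i
  -- `w k = ±1` is its own inverse
  have hb : b = (x k * w k : ℤ) := by
    have hk := hcoord k
    have hsq : (w k : ℚ) * w k = 1 := by exact_mod_cast Int.isUnit_mul_self hwk
    rw [hvk, Int.cast_zero, mul_zero, zero_add] at hk
    push_cast
    rw [← hk, mul_assoc, hsq, mul_one]
  have ha : a.den = 1 := by
    refine Rat.den_eq_one_of_mul_primitive hprim (y := fun i => x i - x k * w k * w i) fun i => ?_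
    push_cast
    rw [← hcoord i, hb]
    push_cast
    ring
  refine ⟨(a.num, x k * w k), funext fun i => ?_⟩
  have hi : (x i : ℚ) = (a.num * v i + x k * w k * w i : ℤ) := by
    rw [← hcoord i, hb]
    push_cast
    rw [Rat.coe_int_num_of_den_eq_one ha]
  exact_mod_cast hi

theorem existsUnique_int_coeffs_of_mem_span_pair {v w x : ι → ℤ}
    (hprim : ∀ (m : ℤ) (u : ι → ℤ), v = m • u → IsUnit m) {k : ι} (hvk : v k = 0)
    (hwk : IsUnit (w k))
    (hx : (fun i => (x i : ℚ)) ∈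
      Submodule.span ℚ ({fun i => (v i : ℚ), fun i => (w i : ℚ)} : Set (ι → ℚ))) :
    ∃! c : ℤ × ℤ, x = c.1 • v + c.2 • w := by
  obtain ⟨c, hc⟩ := exists_int_coeffs_of_mem_span_pair hprim hvk hwk hx
  have hinj := smul_add_smul_injective_of_apply_eq_zero (ne_zero_of_primitive hprim) hvk hwk.ne_zero
  exact ⟨c, hc, fun d hd => hinj (hd.symm.trans hc)⟩

end

theorem stmt18_general (v : Fin 4 → ℤ)
    (hzero : v 0 = 0 ∨ v 3 = 0)
    (hprim : ∀ (m : ℤ) (u : Fin 4 → ℤ), v = m • u → IsUnit m) :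
    ∀ x : Fin 4 → ℤ,
      (fun i => (x i : ℚ)) ∈ Submodule.span ℚ
        ({fun i => (v i : ℚ), ![-1, 1, -1, 1]} : Set (Fin 4 → ℚ)) →
      ∃! c : ℤ × ℤ, x = c.1 • v + c.2 • (![-1, 1, -1, 1] : Fin 4 → ℤ) := by
  intro x hx
  have hcast :
      (![-1, 1, -1, 1] : Fin 4 → ℚ) = fun i => ((![-1, 1, -1, 1] : Fin 4 → ℤ) i : ℚ) := by
    ext i; fin_cases i <;> simp
  obtain ⟨k, hvk, hwk⟩ : ∃ k, v k = 0 ∧ IsUnit ((![-1, 1, -1, 1] : Fin 4 → ℤ) k) :=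
    hzero.elim (fun h => ⟨0, h, by simp⟩) (fun h => ⟨3, h, by simp⟩)
  exact existsUnique_int_coeffs_of_mem_span_pair hprim hvk hwk (hcast ▸ hx)

theorem stmt18 (v : Fin 4 → ℤ) (hsum : ∑ i, v i = 0)
    (hzero : v 0 = 0 ∨ v 3 = 0)
    (hprim : ∀ (m : ℤ) (u : Fin 4 → ℤ), v = m • u → IsUnit m) :
    ∀ x : Fin 4 → ℤ,
      (fun i => (x i : ℚ)) ∈ Submodule.span ℚ
        ({fun i => (v i : ℚ), ![-1, 1, -1, 1]} : Set (Fin 4 → ℚ)) →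
      ∃! c : ℤ × ℤ, x = c.1 • v + c.2 • (![-1, 1, -1, 1] : Fin 4 → ℤ) :=
  stmt18_general v hzero hprim
end
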